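/- arXiv:0802.1872 — 4 statements merged into one kernel-verified Lean document; each statement's English description precedes it below -/
import Mathlib

section
/- There exists a countable conical refinement monoid that is not separative. -/
/-- The algebraic preorder on a commutative monoid: `x ≤ y` iff `∃ z, y = x + z`. -/
def AlgLE {M : Type*} [AddCommMonoid M] (x y : M) : Prop := ∃ z, y = x + z

/-- A monoid is conical if `x + y = 0` implies `x = 0` and `y = 0`. -/
def IsConical (M : Type*) [AddCommMonoid M] : Prop := ∀ x y : M, x + y = 0 → x = 0 ∧ y = 0

/-- A refinement monoid: every equality `a + b = c + d` admits a refinement. -/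
def IsRefinement (M : Type*) [AddCommMonoid M] : Prop :=
  ∀ a b c d : M, a + b = c + d →
    ∃ x y z w : M, a = x + y ∧ b = z + w ∧ c = x + z ∧ d = y + w

/-- Separative: `a + a = a + b` and `b + b = a + b` imply `a = b`. -/
def IsSeparative (M : Type*) [AddCommMonoid M] : Prop :=
  ∀ a b : M, a + a = a + b → b + b = a + b → a = b

/-- A prime element: `p ≠ 0` and `p ≤ a + b` implies `p ≤ a` or `p ≤ b`
(algebraic preorder). -/
def IsPrimeElem {M : Type*} [AddCommMonoid M] (p : M) : Prop :=
  p ≠ 0 ∧ ∀ a b : M, AlgLE p (a + b) → AlgLE p a ∨ AlgLE p b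

/-- Primely generated: every element is a finite sum of prime elements. -/
def PrimelyGenerated (M : Type*) [AddCommMonoid M] : Prop :=
  ∀ x : M, ∃ l : Multiset M, (∀ p ∈ l, IsPrimeElem p) ∧ x = l.sum

/-- Antisymmetric: the algebraic preorder is a partial order. -/
def IsAntisymmetric (M : Type*) [AddCommMonoid M] : Prop :=
  ∀ x y : M, AlgLE x y → AlgLE y x → x = y

/-- A primitive monoid: an antisymmetric, primely generated refinement monoid. -/
def IsPrimitive (M : Type*) [AddCommMonoid M] : Prop :=
  IsAntisymmetric M ∧ PrimelyGenerated M ∧ IsRefinement M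

/-- `M` is a countable conical refinement monoid which is not separative. -/
def IsNonSeparativeCCRM (M : Type) [AddCommMonoid M] : Prop :=
  Countable M ∧ IsConical M ∧ IsRefinement M ∧ ¬ IsSeparative M

/-! Start from `Finset ℕ` under Minkowski addition, where `A = {0, 1, 3, 4}` and
`B = {0, 1, 2, 3, 4}` satisfy `A + A = A + B = B + B`. For a conical monoid `M`, adjoin four new
generators `x, y, z, w` for every equation `a + b = c + d` with nonzero terms, subject to
`a = x + y`, `b = z + w`, `c = x + z`, `d = y + w`. This extension is conservative and conical:
say that an element of `M × ℕ[pieces]` resolves to `t : M` if its pieces can be grouped into whole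
terms of equations whose values, added to its `M`-component, give `t`. Resolution is invariant
under the defining relations: if the two pieces of a term are used by the two terms on the other
side of its equation, those can be exchanged, via `a + b = c + d`, for the two terms on its own
side. Iterating countably often
and passing to the direct limit yields a countable conical refinement monoid in which `A ≠ B`
survive. -/

open Pointwise

theorem isConical_nat : IsConical ℕ := fun _ _ => Nat.add_eq_zero_iff.mp

theorem isConical_finset {α : Type*} [AddCommMonoid α] [DecidableEq α] (hα : IsConical α) :
    IsConical (Finset α) := by
  suffices h : ∀ s t : Finset α, s + t = 0 → s = 0 from fun s t hst =>
    ⟨h s t hst, h t s (by rwa [add_comm])⟩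
  intro s t hst
  have hne : (s + t).Nonempty := by rw [hst]; exact Finset.singleton_nonempty 0
  obtain ⟨y, hy⟩ := hne.of_add_right
  refine (hne.of_add_left.subset_singleton_iff).mp fun x hx => ?_
  have hxy : x + y ∈ (0 : Finset α) := hst ▸ Finset.add_mem_add hx hy
  exact Finset.mem_singleton.mpr (hα x y (Finset.mem_singleton.mp hxy)).1

theorem not_isSeparative_finset_nat : ¬ IsSeparative (Finset ℕ) := fun h =>
  absurd (h {0, 1, 3, 4} {0, 1, 2, 3, 4} (by decide) (by decide)) (by decide)

theorem exists_refinement_of_eq_zero {M : Type*} [AddCommMonoid M] {a b c d : M}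
    (h : a + b = c + d) (h0 : a = 0 ∨ b = 0 ∨ c = 0 ∨ d = 0) :
    ∃ x y z w : M, a = x + y ∧ b = z + w ∧ c = x + z ∧ d = y + w := by
  rcases h0 with rfl | rfl | rfl | rfl
  · exact ⟨0, 0, c, d, by simp, by simpa using h, by simp, by simp⟩
  · exact ⟨c, d, 0, 0, by simpa using h, by simp, by simp, by simp⟩
  · exact ⟨0, a, 0, b, by simp, by simp, by simp, by simpa using h.symm⟩
  · exact ⟨a, 0, b, 0, by simp, by simp, by simpa using h.symm, by simp⟩

namespace AddMonoidHom

variable {M N : Type*} [AddCommMonoid M] [AddCommMonoid N]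

def Refines (φ : M →+ N) : Prop :=
  ∀ a b c d : M, a + b = c + d →
    ∃ x y z w : N, φ a = x + y ∧ φ b = z + w ∧ φ c = x + z ∧ φ d = y + w

section NatLERec

variable {G : ℕ → Type*} [∀ n, AddMonoid (G n)] (φ : ∀ n, G n →+ G (n + 1))

def natLERec (i j : ℕ) (h : i ≤ j) : G i →+ G j :=
  Nat.leRecOn h (fun g => (φ _).comp g) (AddMonoidHom.id _)

theorem natLERec_self (i : ℕ) : natLERec φ i i le_rfl = AddMonoidHom.id _ :=
  Nat.leRecOn_self _

theorem natLERec_succ {i j : ℕ} (h : i ≤ j) :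
    natLERec φ i (j + 1) (h.trans j.le_succ) = (φ j).comp (natLERec φ i j h) :=
  Nat.leRecOn_succ h _

theorem natLERec_succ' (i : ℕ) : natLERec φ i (i + 1) i.le_succ = φ i := by
  rw [natLERec_succ φ le_rfl, natLERec_self, comp_id]

instance : DirectedSystem G (natLERec φ · · ·) where
  map_self i x := by rw [natLERec_self]; rfl
  map_map k j i hij hjk x := by
    induction k, hjk using Nat.le_induction with
    | base => rw [natLERec_self]; rfl
    | succ k hjk ih =>
      rw [natLERec_succ φ hjk, natLERec_succ φ (hij.trans hjk), comp_apply, comp_apply, ih]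

theorem natLERec_injective (hφ : ∀ n, Function.Injective (φ n)) (i j : ℕ) (h : i ≤ j) :
    Function.Injective (natLERec φ i j h) := by
  induction j, h using Nat.le_induction with
  | base => rw [natLERec_self]; exact Function.injective_id
  | succ j hij ih => rw [natLERec_succ φ hij, coe_comp]; exact (hφ j).comp ih

end NatLERec

end AddMonoidHom

namespace DirectLimit

variable {ι : Type*} [Preorder ι] [IsDirectedOrder ι] [Nonempty ι] {G : ι → Type*}
  [∀ i, AddCommMonoid (G i)] {f : ∀ i j, i ≤ j → G i →+ G j} [DirectedSystem G (f · · ·)]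

theorem isConical (hG : ∀ i, IsConical (G i)) : IsConical (DirectLimit G f) := by
  intro x y hxy
  induction x, y using DirectLimit.induction₂ with
  | ih i a b =>
    rw [add_def, zero_def i] at hxy
    obtain ⟨j, hij, _, hj⟩ := Quotient.exact hxy
    rw [map_add, map_zero] at hj
    rw [zero_def j, ← mk_apply i j a hij, ← mk_apply i j b hij, (hG j _ _ hj).1, (hG j _ _ hj).2]
    exact ⟨rfl, rfl⟩

theorem isRefinement (hG : ∀ i, ∃ j, ∃ hij : i ≤ j, (f i j hij).Refines) :
    IsRefinement (DirectLimit G f) := by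
  intro a b c d habcd
  obtain ⟨i, a, b, rfl, rfl⟩ := exists_eq_mk₂ f a b
  obtain ⟨i', c, d, rfl, rfl⟩ := exists_eq_mk₂ f c d
  rw [add_def, add_def] at habcd
  obtain ⟨k, hik, hik', hk⟩ := Quotient.exact habcd
  rw [map_add, map_add] at hk
  obtain ⟨l, hkl, hl⟩ := hG k
  obtain ⟨x, y, z, w, ha, hb, hc, hd⟩ := hl _ _ _ _ hk
  refine ⟨⟦⟨l, x⟩⟧, ⟦⟨l, y⟩⟧, ⟦⟨l, z⟩⟧, ⟦⟨l, w⟩⟧, ?_, ?_, ?_, ?_⟩ <;>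
    simp only [add_def, ← ha, ← hb, ← hc, ← hd, mk_apply]

theorem not_isSeparative (hf : ∀ i j h, Function.Injective (f i j h)) {i : ι}
    (hG : ¬ IsSeparative (G i)) : ¬ IsSeparative (DirectLimit G f) := by
  intro hsep
  refine hG fun a b h₁ h₂ => mk_injective f hf i (hsep _ _ ?_ ?_)
  · simp only [add_def, h₁]
  · simp only [add_def, h₂]

end DirectLimit

namespace RefinementStep

variable (M : Type*) [AddCommMonoid M]

/-- Equations with a zero term are left out: they have trivial refinements already, and pieces
adjoined for them would give nonzero elements with sum zero. -/
structure Equation where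
  a : M
  b : M
  c : M
  d : M
  rel : a + b = c + d
  ha : a ≠ 0
  hb : b ≠ 0
  hc : c ≠ 0
  hd : d ≠ 0

/-- The terms `a, b, c, d` of an equation are `inl false, inl true, inr false, inr true`, and the
piece `(i, j)` is the common part of left term `i` and right term `j`; so the pieces
`x, y, z, w` are `(false, false), (false, true), (true, false), (true, true)`. -/
abbrev Term : Type := Bool ⊕ Bool

abbrev Piece : Type := Bool × Bool

abbrev FreeExt : Type _ := M × Multiset (Equation M × Piece)

variable {M}

def Equation.term (e : Equation M) : Term → M
  | .inl false => e.a
  | .inl true => e.b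
  | .inr false => e.c
  | .inr true => e.d

def Term.pieces : Term → Multiset Piece
  | .inl i => {(i, false), (i, true)}
  | .inr j => {(false, j), (true, j)}

def pieces (g : Multiset (Equation M × Term)) : Multiset (Equation M × Piece) :=
  g.bind fun r => r.2.pieces.map (r.1, ·)

def value (g : Multiset (Equation M × Term)) : M :=
  (g.map fun r => r.1.term r.2).sum

@[simp] theorem pieces_zero : pieces (0 : Multiset (Equation M × Term)) = 0 := Multiset.zero_bind _

@[simp] theorem pieces_add (g g' : Multiset (Equation M × Term)) :
    pieces (g + g') = pieces g + pieces g' := Multiset.add_bind _ _ _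

@[simp] theorem pieces_cons (r : Equation M × Term) (g : Multiset (Equation M × Term)) :
    pieces (r ::ₘ g) = r.2.pieces.map (r.1, ·) + pieces g := Multiset.cons_bind _ _ _

@[simp] theorem pieces_singleton (r : Equation M × Term) :
    pieces {r} = r.2.pieces.map (r.1, ·) := Multiset.singleton_bind _ _

@[simp] theorem value_zero : value (0 : Multiset (Equation M × Term)) = 0 := by simp [value]

@[simp] theorem value_add (g g' : Multiset (Equation M × Term)) :
    value (g + g') = value g + value g' := by simp [value]

@[simp] theorem value_cons (r : Equation M × Term) (g : Multiset (Equation M × Term)) :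
    value (r ::ₘ g) = r.1.term r.2 + value g := by simp [value]

theorem Term.mem_pieces {s : Term} {i j : Bool} : (i, j) ∈ s.pieces ↔ s = .inl i ∨ s = .inr j := by
  rcases s with i' | j' <;> cases i <;> cases j <;> decide +revert

theorem mem_pieces_iff {g : Multiset (Equation M × Term)} {e : Equation M} {i j : Bool} :
    (e, (i, j)) ∈ pieces g ↔ (e, .inl i) ∈ g ∨ (e, .inr j) ∈ g := by
  simp only [pieces, Multiset.mem_bind, Multiset.mem_map, Prod.mk.injEq]
  constructor
  · rintro ⟨⟨e', s⟩, hs, p, hp, rfl, rfl⟩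
    rcases Term.mem_pieces.mp hp with rfl | rfl <;> simp [hs]
  · rintro (h | h) <;> exact ⟨_, h, (i, j), Term.mem_pieces.mpr (by simp), rfl, rfl⟩

theorem pieces_eq_zero_iff {g : Multiset (Equation M × Term)} : pieces g = 0 ↔ g = 0 := by
  refine ⟨fun h => ?_, fun h => h ▸ pieces_zero⟩
  induction g using Multiset.induction_on with
  | empty => rfl
  | cons r g _ =>
    rcases r with ⟨e, _ | _⟩ <;> simp [Term.pieces] at h

theorem eq_zero_of_value_eq_zero (hM : IsConical M) {g : Multiset (Equation M × Term)}
    (h : value g = 0) : g = 0 := by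
  induction g using Multiset.induction_on with
  | empty => rfl
  | cons r g _ =>
    rw [value_cons] at h
    rcases r with ⟨e, (_ | _) | (_ | _)⟩ <;>
      exact absurd (hM _ _ h).1 (by simp [Equation.term, e.ha, e.hb, e.hc, e.hd])

def lefts (e : Equation M) : Multiset (Equation M × Term) := {(e, .inl false), (e, .inl true)}

def rights (e : Equation M) : Multiset (Equation M × Term) := {(e, .inr false), (e, .inr true)}

theorem pieces_lefts (e : Equation M) : pieces (lefts e) = pieces (rights e) := by
  simp [lefts, rights, Term.pieces, Multiset.cons_swap]

theorem value_lefts (e : Equation M) : value (lefts e) = value (rights e) := by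
  simp [lefts, rights, value, Equation.term, e.rel]

/-- If `(e, s)` is not in `g`, both pieces of `s` are covered by the two terms on the other side
of `e`, and these can be traded for the two terms on the side of `s`. -/
theorem exists_mem_of_pieces_le {g : Multiset (Equation M × Term)} {e : Equation M} {s : Term}
    (h : pieces {(e, s)} ≤ pieces g) :
    ∃ g', pieces g' = pieces g ∧ value g' = value g ∧ (e, s) ∈ g' := by
  by_cases hs : (e, s) ∈ g
  · exact ⟨g, rfl, rfl, hs⟩
  have hmem : ∀ p ∈ s.pieces, (e, p) ∈ pieces g := fun p hp =>
    Multiset.subset_of_le h (by simpa using hp)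
  obtain ⟨L, R, hLg, hsR, hpieces, hvalue⟩ : ∃ L R : Multiset (Equation M × Term),
      L ≤ g ∧ (e, s) ∈ R ∧ pieces L = pieces R ∧ value L = value R := by
    rcases s with i | j
    · have hright : ∀ j, (e, .inr j) ∈ g := fun j =>
        (mem_pieces_iff.mp (hmem (i, j) (Term.mem_pieces.mpr (.inl rfl)))).resolve_left hs
      refine ⟨rights e, lefts e, ?_, by cases i <;> simp [lefts], (pieces_lefts e).symm,
        (value_lefts e).symm⟩
      exact (Multiset.le_iff_subset (by simp [rights])).mpr (by simp [rights, hright])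
    · have hleft : ∀ i, (e, .inl i) ∈ g := fun i =>
        (mem_pieces_iff.mp (hmem (i, j) (Term.mem_pieces.mpr (.inr rfl)))).resolve_right hs
      refine ⟨lefts e, rights e, ?_, by cases j <;> simp [rights], pieces_lefts e, value_lefts e⟩
      exact (Multiset.le_iff_subset (by simp [lefts])).mpr (by simp [lefts, hleft])
  obtain ⟨u, rfl⟩ := Multiset.le_iff_exists_add.mp hLg
  refine ⟨R + u, ?_, ?_, Multiset.mem_add.mpr (Or.inl hsR)⟩ <;>
    simp only [pieces_add, value_add, hpieces, hvalue]

def Resolves (p : FreeExt M) (t : M) : Prop :=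
  ∃ g, pieces g = p.2 ∧ t = p.1 + value g

theorem resolves_zero_snd_iff {m t : M} : Resolves (m, 0) t ↔ t = m := by
  refine ⟨fun ⟨g, hg, ht⟩ => ?_, fun ht => ⟨0, pieces_zero, by simp [ht]⟩⟩
  rw [pieces_eq_zero_iff.mp hg, value_zero, add_zero] at ht
  exact ht

theorem eq_zero_of_resolves_zero (hM : IsConical M) {p : FreeExt M} (h : Resolves p 0) : p = 0 := by
  obtain ⟨g, hg, h0⟩ := h
  have hg0 := eq_zero_of_value_eq_zero hM (hM _ _ h0.symm).2
  rw [hg0, pieces_zero] at hg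
  exact Prod.ext (hM _ _ h0.symm).1 hg.symm

inductive SplitRel : FreeExt M → FreeExt M → Prop
  | split (e : Equation M) (s : Term) : SplitRel (e.term s, 0) (0, pieces {(e, s)})

theorem resolves_split_add_iff (e : Equation M) (s : Term) (w : FreeExt M) (t : M) :
    Resolves ((e.term s, 0) + w) t ↔ Resolves ((0, pieces {(e, s)}) + w) t := by
  obtain ⟨m, f⟩ := w
  simp only [Prod.mk_add_mk, zero_add, Resolves]
  constructor
  · rintro ⟨g, rfl, rfl⟩
    exact ⟨(e, s) ::ₘ g, by simp, by rw [value_cons]; abel⟩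
  · rintro ⟨g, hg, rfl⟩
    obtain ⟨g', hpieces, hvalue, hmem⟩ := exists_mem_of_pieces_le (hg ▸ le_add_right le_rfl)
    obtain ⟨g'', rfl⟩ := Multiset.exists_cons_of_mem hmem
    refine ⟨g'', ?_, ?_⟩
    · rw [← hpieces, pieces_cons, ← pieces_singleton] at hg
      exact add_left_cancel hg
    · rw [← hvalue, value_cons]; abel

/-- Quantifying over the context `w` is what makes the `add` case of the induction go through. -/
theorem resolves_add_iff_of_rel {p q : FreeExt M} (h : addConGen SplitRel p q) (w : FreeExt M)
    (t : M) :
    Resolves (p + w) t ↔ Resolves (q + w) t := by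
  induction h generalizing w with
  | of p q h => obtain ⟨e, s⟩ := h; exact resolves_split_add_iff e s w t
  | refl => rfl
  | symm _ ih => exact (ih w).symm
  | trans _ _ ih₁ ih₂ => exact (ih₁ w).trans (ih₂ w)
  | @add p₁ q₁ p₂ q₂ _ _ ih₁ ih₂ =>
    calc Resolves (p₁ + p₂ + w) t ↔ Resolves (q₁ + (p₂ + w)) t := by rw [add_assoc]; exact ih₁ _
      _ ↔ Resolves (p₂ + (q₁ + w)) t := by rw [add_left_comm]
      _ ↔ Resolves (q₂ + (q₁ + w)) t := ih₂ _
      _ ↔ Resolves (q₁ + q₂ + w) t := by rw [add_assoc, add_left_comm]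

end RefinementStep

def RefinementStep (M : Type*) [AddCommMonoid M] : Type _ :=
  (addConGen (RefinementStep.SplitRel (M := M))).Quotient

namespace RefinementStep

variable {M : Type*} [AddCommMonoid M]

instance : AddCommMonoid (RefinementStep M) :=
  inferInstanceAs (AddCommMonoid (addConGen SplitRel).Quotient)

def mk : FreeExt M →+ RefinementStep M := (addConGen SplitRel).mk'

def of : M →+ RefinementStep M := mk.comp (AddMonoidHom.inl M _)

theorem mk_surjective : Function.Surjective (mk : FreeExt M → RefinementStep M) :=
  AddCon.mk'_surjective

theorem resolves_iff_of_mk_eq {p q : FreeExt M} (h : mk p = mk q) (t : M) :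
    Resolves p t ↔ Resolves q t := by
  simpa using resolves_add_iff_of_rel ((AddCon.eq _).mp h) 0 t

theorem of_injective : Function.Injective (of : M → RefinementStep M) := fun m _ h =>
  resolves_zero_snd_iff.mp ((resolves_iff_of_mk_eq h m).mp (resolves_zero_snd_iff.mpr rfl))

theorem isConical (hM : IsConical M) : IsConical (RefinementStep M) := by
  intro x y hxy
  obtain ⟨p, rfl⟩ := mk_surjective x
  obtain ⟨q, rfl⟩ := mk_surjective y
  rw [← map_add, ← map_zero mk] at hxy
  have hpq := eq_zero_of_resolves_zero hM ((resolves_iff_of_mk_eq hxy 0).mpr ⟨0, rfl, by simp⟩)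
  have h₁ := hM _ _ congr(Prod.fst $hpq)
  have h₂ := add_eq_zero.mp congr(Prod.snd $hpq)
  rw [show p = 0 from Prod.ext h₁.1 h₂.1, show q = 0 from Prod.ext h₁.2 h₂.2, map_zero]
  exact ⟨rfl, rfl⟩

theorem of_term (e : Equation M) (s : Term) : of (e.term s) = mk (0, pieces {(e, s)}) :=
  (AddCon.eq _).mpr (AddConGen.Rel.of _ _ (.split e s))

theorem of_refines : (of : M →+ RefinementStep M).Refines := by
  intro a b c d h
  by_cases h0 : a = 0 ∨ b = 0 ∨ c = 0 ∨ d = 0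
  · obtain ⟨x, y, z, w, hx, hy, hz, hw⟩ := exists_refinement_of_eq_zero h h0
    exact ⟨of x, of y, of z, of w, by simp [hx, hy, hz, hw]⟩
  push Not at h0
  let e : Equation M := ⟨a, b, c, d, h, h0.1, h0.2.1, h0.2.2.1, h0.2.2.2⟩
  let piece (p : Piece) : RefinementStep M := mk (0, {(e, p)})
  have hterm (s : Term) (u v : Piece) (hs : s.pieces = {u, v}) :
      of (e.term s) = piece u + piece v := by
    rw [of_term, ← map_add]
    simp [hs]
  exact ⟨piece (false, false), piece (false, true), piece (true, false), piece (true, true),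
    hterm (.inl false) _ _ rfl, hterm (.inl true) _ _ rfl, hterm (.inr false) _ _ rfl,
    hterm (.inr true) _ _ rfl⟩

instance [Countable M] : Countable (RefinementStep M) :=
  have : Countable (Equation M) :=
    Function.Injective.countable (f := fun e : Equation M => (e.a, e.b, e.c, e.d)) <| by
      rintro ⟨⟩ ⟨⟩ h
      simp_all
  mk_surjective.countable

end RefinementStep

def refinementTower : ℕ → AddCommMonCat.{0}
  | 0 => .of (Finset ℕ)
  | n + 1 => .of (RefinementStep (refinementTower n))

def refinementTowerStep (n : ℕ) : refinementTower n →+ refinementTower (n + 1) := RefinementStep.of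

theorem isConical_refinementTower : ∀ n, IsConical (refinementTower n)
  | 0 => isConical_finset isConical_nat
  | n + 1 => RefinementStep.isConical (isConical_refinementTower n)

instance countable_refinementTower : ∀ n, Countable (refinementTower n)
  | 0 => inferInstanceAs (Countable (Finset ℕ))
  | n + 1 =>
    have := countable_refinementTower n
    inferInstanceAs (Countable (RefinementStep (refinementTower n)))

/-- There exists a countable conical refinement monoid that is not separative. -/
theorem statement1 : ∃ (M : Type) (instM : AddCommMonoid M), @IsNonSeparativeCCRM M instM := by
  refine ⟨DirectLimit (fun n => refinementTower n) (AddMonoidHom.natLERec refinementTowerStep),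
    inferInstance, inferInstance,
    DirectLimit.isConical isConical_refinementTower, ?_, ?_⟩
  · refine DirectLimit.isRefinement fun n => ⟨n + 1, n.le_succ, ?_⟩
    rw [AddMonoidHom.natLERec_succ' refinementTowerStep]
    exact RefinementStep.of_refines
  · exact DirectLimit.not_isSeparative (AddMonoidHom.natLERec_injective _
      fun _ => RefinementStep.of_injective) (i := 0) not_isSeparative_finset_nat
end

section
/- Let M be the quotient of the free commutative monoid on the generators a, p₀, p₁, p₂, … by the smallest monoid congruence identifying p_i with p_{i+1} + a for every i ≥ 0. Then the class of a is a prime element of M, every prime element of M equals the class of a, and M is not primely generated (in particular the class of p₀ is not a finite sum of prime elements). -/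
/-- The defining relations: `p_i = p_{i+1} + a` for all `i ≥ 0`, where `some i`
stands for `p_i` and `none` stands for `a`.  (The free commutative monoid on the
generators is `Multiset (Option ℕ)`.) -/
def rel6 : Multiset (Option ℕ) → Multiset (Option ℕ) → Prop :=
  fun x y => ∃ i : ℕ,
    x = ({Option.some i} : Multiset (Option ℕ)) ∧
    y = ({Option.some (i + 1)} : Multiset (Option ℕ)) + ({Option.none} : Multiset (Option ℕ))

/-- The monoid with generators `a, p₀, p₁, …` and relations `p_i = p_{i+1} + a`. -/
abbrev M6 := (addConGen rel6).Quotient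

/-!
Two invariants survive the relations `p_i = p_{i+1} + a`: the number of `p`'s, and the
`a`-content obtained by giving `p_i` weight `-i` (as if `p_i = p_0 - i • a`). An element with
no `p`'s is a multiple `n • a`, and its `a`-content is `n`. Since every generator is `≥ a`, so
is every nonzero element; from this `a` is prime, and a prime `x = a + y` must lie below `a`
(lying below `y` would make `a + y ≤ y`, impossible by `a`-content), so `x = a`. The class of
`p₀` has one `p`, whereas a sum of copies of `a` has none.
-/

theorem AlgLE.add_right {M : Type*} [AddCommMonoid M] {x y : M} (h : AlgLE x y) (z : M) :
    AlgLE x (y + z) := by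
  obtain ⟨w, rfl⟩ := h
  exact ⟨w + z, add_assoc x w z⟩

namespace M6

def a : M6 := (addConGen rel6).mk' {none}

def p (i : ℕ) : M6 := (addConGen rel6).mk' {some i}

theorem p_eq_p_succ_add_a (i : ℕ) : p i = p (i + 1) + a := by
  rw [p, p, a, ← map_add]
  exact (AddCon.eq _).2 (AddConGen.Rel.of _ _ ⟨i, rfl, rfl⟩)

def liftGen {N : Type*} [AddCommMonoid N] (w : Option ℕ → N)
    (hw : ∀ i, w (some i) = w (some (i + 1)) + w none) : M6 →+ N :=
  (addConGen rel6).lift (Multiset.sumAddMonoidHom.comp (Multiset.mapAddMonoidHom w)) <|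
    AddCon.addConGen_le.2 fun _ _ ⟨i, hx, hy⟩ => by
      subst hx hy
      simpa [AddCon.ker_rel] using hw i

def pCount : M6 →+ ℕ :=
  liftGen (fun o => o.elim 0 fun _ => 1) fun _ => rfl

theorem pCount_mk' (s : Multiset (Option ℕ)) :
    pCount ((addConGen rel6).mk' s) = (s.map fun o => o.elim 0 fun _ => 1).sum :=
  AddCon.lift_mk' _ _

def aContent : M6 →+ ℤ :=
  liftGen (fun o => o.elim 1 fun i => -(i : ℤ)) fun i => by
    simp only [Option.elim]
    push_cast
    ring

@[simp] theorem pCount_a : pCount a = 0 := rfl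

@[simp] theorem pCount_p (i : ℕ) : pCount (p i) = 1 := rfl

@[simp] theorem aContent_a : aContent a = 1 := rfl

@[simp] theorem aContent_nsmul_a (n : ℕ) : aContent (n • a) = n := by simp

theorem exists_eq_nsmul_a_of_pCount_eq_zero {x : M6} (hx : pCount x = 0) :
    ∃ n : ℕ, x = n • a := by
  obtain ⟨s, rfl⟩ := AddCon.mk'_surjective x
  have hs : ∀ o ∈ s, o = none := by
    simp only [pCount_mk', Multiset.sum_eq_zero_iff, Multiset.mem_map] at hx
    intro o ho
    cases o with
    | none => rfl
    | some i => exact absurd (hx _ ⟨_, ho, rfl⟩) one_ne_zero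
  refine ⟨Multiset.card s, ?_⟩
  rw [Multiset.eq_replicate_card.2 hs, ← Multiset.nsmul_singleton, map_nsmul,
    Multiset.card_nsmul, Multiset.card_singleton, mul_one, a]

theorem a_le_of_ne_zero {x : M6} (hx : x ≠ 0) : AlgLE a x := by
  obtain ⟨s, rfl⟩ := AddCon.mk'_surjective x
  obtain ⟨o, ho⟩ := Multiset.exists_mem_of_ne_zero fun hs : s = 0 => hx (by rw [hs, map_zero])
  obtain ⟨t, rfl⟩ := Multiset.exists_cons_of_mem ho
  rw [← Multiset.singleton_add, map_add]
  refine AlgLE.add_right ?_ _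
  cases o with
  | none => exact ⟨0, (add_zero _).symm⟩
  | some i => exact ⟨p (i + 1), (p_eq_p_succ_add_a i).trans (add_comm _ _)⟩

theorem not_add_a_le_self (y : M6) : ¬ AlgLE (a + y) y := by
  rintro ⟨w, hw⟩
  obtain ⟨n, rfl⟩ : ∃ n : ℕ, w = n • a :=
    exists_eq_nsmul_a_of_pCount_eq_zero (by simpa using congrArg pCount hw)
  have := congrArg aContent hw
  simp only [map_add, aContent_a, aContent_nsmul_a] at this
  omega

theorem not_a_le_zero : ¬ AlgLE a 0 := by
  simpa using not_add_a_le_self 0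

theorem eq_zero_or_eq_a_of_le_a {x : M6} (hx : AlgLE x a) : x = 0 ∨ x = a := by
  obtain ⟨w, hw⟩ := hx
  have hp := congrArg pCount hw
  simp only [pCount_a, map_add] at hp
  obtain ⟨n, rfl⟩ := exists_eq_nsmul_a_of_pCount_eq_zero (x := x) (by omega)
  obtain ⟨k, rfl⟩ := exists_eq_nsmul_a_of_pCount_eq_zero (x := w) (by omega)
  have hc := congrArg aContent hw
  simp only [map_add, aContent_a, aContent_nsmul_a] at hc
  obtain rfl | rfl : n = 0 ∨ n = 1 := by omega
  exacts [Or.inl (zero_nsmul a), Or.inr (one_nsmul a)]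

theorem isPrimeElem_a : IsPrimeElem a := by
  refine ⟨fun h => not_a_le_zero (h ▸ ⟨0, (add_zero _).symm⟩), fun x y h => ?_⟩
  by_cases hx : x = 0
  · by_cases hy : y = 0
    · subst hx hy
      exact absurd (by simpa using h) not_a_le_zero
    · exact Or.inr (a_le_of_ne_zero hy)
  · exact Or.inl (a_le_of_ne_zero hx)

theorem eq_a_of_isPrimeElem {x : M6} (hx : IsPrimeElem x) : x = a := by
  obtain ⟨y, rfl⟩ := a_le_of_ne_zero hx.1
  rcases hx.2 a y ⟨0, (add_zero _).symm⟩ with h | h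
  · exact (eq_zero_or_eq_a_of_le_a h).resolve_left hx.1
  · exact absurd h (not_add_a_le_self y)

theorem not_exists_sum_primes_eq_p (i : ℕ) :
    ¬ ∃ l : Multiset M6, (∀ q ∈ l, IsPrimeElem q) ∧ p i = l.sum := by
  rintro ⟨l, hl, hsum⟩
  have := congrArg pCount hsum
  rw [pCount_p, map_multiset_sum, Multiset.sum_eq_zero fun n hn => ?_] at this
  · exact one_ne_zero this
  obtain ⟨q, hq, rfl⟩ := Multiset.mem_map.1 hn
  rw [eq_a_of_isPrimeElem (hl q hq), pCount_a]

end M6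

/-- In the monoid `⟨a, p₀, p₁, … ∣ p_i = p_{i+1} + a⟩`, the class of `a` is prime,
it is the only prime element, and the monoid is not primely generated; in
particular the class of `p₀` is not a finite sum of primes. -/
theorem statement6 :
    IsPrimeElem ((addConGen rel6).mk' ({Option.none} : Multiset (Option ℕ))) ∧
    (∀ x : M6, IsPrimeElem x →
      x = (addConGen rel6).mk' ({Option.none} : Multiset (Option ℕ))) ∧
    ¬ PrimelyGenerated M6 ∧
    ¬ ∃ l : Multiset M6, (∀ p ∈ l, IsPrimeElem p) ∧
        (addConGen rel6).mk' ({Option.some 0} : Multiset (Option ℕ)) = l.sum :=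
  ⟨M6.isPrimeElem_a, fun _ => M6.eq_a_of_isPrimeElem,
    fun h => M6.not_exists_sum_primes_eq_p 0 (h _), M6.not_exists_sum_primes_eq_p 0⟩
end

section
/- Let P be a set and ◁ a transitive antisymmetric relation on P, and let M(P,◁) be the quotient of the free commutative monoid on P by the smallest monoid congruence identifying p with p + q whenever q ◁ p. Then M(P,◁) is a primitive monoid (that is, a conical, antisymmetric, primely generated refinement monoid), the canonical map P → M(P,◁) is injective, the prime elements of M(P,◁) are exactly the classes of the elements of P, and for p, q ∈ P one has [p] + [q] = [p] if and only if q ◁ p. -/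
/-- The defining relations of `M(P, ◁)`: `p = p + q` whenever `q ◁ p`.
(The free commutative monoid on `P` is `Multiset P`.) -/
def primRel (P : Type) (lt : P → P → Prop) : Multiset P → Multiset P → Prop :=
  fun x y => ∃ p q : P, lt q p ∧ x = ({p} : Multiset P) ∧
    y = ({p} : Multiset P) + ({q} : Multiset P)

/-- The monoid `M(P, ◁)`: quotient of the free commutative monoid on `P` by the
smallest monoid congruence identifying `p` with `p + q` whenever `q ◁ p`. -/
abbrev PrimMonoid (P : Type) (lt : P → P → Prop) := (addConGen (primRel P lt)).Quotient

/-!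
Send a multiset `s` over `P` to `weight s : P → WithTop ℕ`, which is `⊤` at the elements `q`
absorbed by `s` (`q ◁ r` for some `r ∈ s`) and the multiplicity of `q` in `s` elsewhere. It is
additive, and by transitivity it takes the same value on `p` and `p + q` for `q ◁ p`. Conversely,
two multisets of equal weight have the same unabsorbed part, so each becomes the other after adding
absorbed elements, which does not change its class. Hence `M(P, ◁)` embeds into the canonically
ordered monoid `P → WithTop ℕ`, so it is conical and antisymmetric, and `[p] ≤ x` iff `x` has
nonzero weight at `p`, which makes `[p]` prime.
-/

open Multiset hiding map_add map_zero

section AlgLE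

variable {M N : Type*} [AddCommMonoid M] [AddCommMonoid N]

theorem AlgLE.refl (x : M) : AlgLE x x := ⟨0, (add_zero x).symm⟩

theorem AlgLE.map (f : M →+ N) {x y : M} (h : AlgLE x y) : AlgLE (f x) (f y) := by
  obtain ⟨z, rfl⟩ := h
  exact ⟨f z, map_add f x z⟩

theorem isConical_of_injective [Subsingleton (AddUnits N)] (f : M →+ N)
    (hf : Function.Injective f) : IsConical M := by
  intro x y h
  have hf0 : f x = 0 ∧ f y = 0 := add_eq_zero.1 (by rw [← map_add, h, map_zero])
  exact ⟨hf (hf0.1.trans (map_zero f).symm), hf (hf0.2.trans (map_zero f).symm)⟩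

theorem isAntisymmetric_of_injective [PartialOrder N] [CanonicallyOrderedAdd N] (f : M →+ N)
    (hf : Function.Injective f) : IsAntisymmetric M := by
  intro x y hxy hyx
  obtain ⟨z, hz⟩ := hxy.map f
  obtain ⟨w, hw⟩ := hyx.map f
  exact hf (le_antisymm (hz ▸ le_self_add) (hw ▸ le_self_add))

theorem IsPrimeElem.exists_algLE_of_algLE_sum (hM : IsConical M) {p : M} (hp : IsPrimeElem p)
    {l : Multiset M} (h : AlgLE p l.sum) : ∃ a ∈ l, AlgLE p a := by
  induction l using Multiset.induction with
  | empty =>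
    obtain ⟨z, hz⟩ := h
    exact absurd (hM p z hz.symm).1 hp.1
  | cons a l ih =>
    rw [sum_cons] at h
    rcases hp.2 a l.sum h with ha | hl
    · exact ⟨a, mem_cons_self a l, ha⟩
    · obtain ⟨b, hb, hpb⟩ := ih hl
      exact ⟨b, mem_cons_of_mem hb, hpb⟩

end AlgLE

theorem Multiset.isRefinement {α : Type*} : IsRefinement (Multiset α) := by
  classical
  intro a b c d h
  refine ⟨a ∩ c, a - c, c - a, b - (c - a), ?_, ?_, ?_, ?_⟩ <;> ext q <;>
  · have hq := congr_arg (count q) h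
    simp only [count_add, count_inter, count_sub] at hq ⊢
    omega

namespace PrimMonoid

variable {P : Type} {lt : P → P → Prop}

open scoped Classical

local notation "π" => AddCon.mk' (addConGen (primRel P lt))

def Absorbs (lt : P → P → Prop) (s : Multiset P) (q : P) : Prop := ∃ r ∈ s, lt q r

theorem absorbs_add {s t : Multiset P} {q : P} :
    Absorbs lt (s + t) q ↔ Absorbs lt s q ∨ Absorbs lt t q := by
  simp only [Absorbs, mem_add, or_and_right, exists_or]

theorem mk_add_eq_of_forall_absorbs {s u : Multiset P} (h : ∀ q ∈ u, Absorbs lt s q) :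
    π (s + u) = π s := by
  induction u using Multiset.induction with
  | empty => rw [add_zero]
  | cons q u ih =>
    obtain ⟨r, hr, hqr⟩ := h q (mem_cons_self q u)
    obtain ⟨t, rfl⟩ := exists_cons_of_mem hr
    have hrel : π ({r} + {q}) = π {r} := (AddCon.eq _).2 <|
      (addConGen _).symm (AddConGen.Rel.of _ _ ⟨r, q, hqr, rfl, rfl⟩)
    calc π (r ::ₘ t + q ::ₘ u) = π ({r} + {q}) + π (t + u) := by
          rw [← map_add]; congr 1; simp only [cons_add, add_cons, singleton_add, cons_swap]
      _ = π (r ::ₘ t + u) := by rw [hrel, ← map_add, singleton_add, cons_add]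
      _ = π (r ::ₘ t) := ih fun q' hq' => h q' (mem_cons_of_mem hq')

noncomputable def weight (lt : P → P → Prop) (s : Multiset P) (q : P) : WithTop ℕ :=
  if Absorbs lt s q then ⊤ else count q s

theorem weight_eq_top_iff {s : Multiset P} {q : P} : weight lt s q = ⊤ ↔ Absorbs lt s q := by
  unfold weight; split_ifs with h <;> simp [h]

theorem weight_ne_zero_iff {s : Multiset P} {q : P} :
    weight lt s q ≠ 0 ↔ q ∈ s ∨ Absorbs lt s q := by
  unfold weight; split_ifs with h <;> simp [h]

theorem weight_add (s t : Multiset P) : weight lt (s + t) = weight lt s + weight lt t := by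
  funext q
  by_cases hs : Absorbs lt s q <;> by_cases ht : Absorbs lt t q <;>
    simp [weight, absorbs_add, hs, ht]

noncomputable def weightHom (lt : P → P → Prop) : Multiset P →+ (P → WithTop ℕ) where
  toFun := weight lt
  map_zero' := by funext q; simp [weight, Absorbs]
  map_add' := weight_add

theorem absorbs_iff_of_weight_eq {s t : Multiset P} (h : weight lt s = weight lt t) (q : P) :
    Absorbs lt s q ↔ Absorbs lt t q := by
  rw [← weight_eq_top_iff, ← weight_eq_top_iff, h]

theorem count_eq_of_weight_eq {s t : Multiset P} (h : weight lt s = weight lt t) {q : P}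
    (hq : ¬ Absorbs lt s q) : count q s = count q t := by
  have hqt := (absorbs_iff_of_weight_eq h q).not.1 hq
  simpa [weight, hq, hqt] using congr_fun h q

theorem filter_not_absorbs_eq_of_weight_eq {s t : Multiset P} (h : weight lt s = weight lt t) :
    s.filter (¬ Absorbs lt s ·) = t.filter (¬ Absorbs lt s ·) := by
  ext q
  simp only [count_filter]
  split_ifs with hq
  · rfl
  · exact count_eq_of_weight_eq h hq

theorem mk_eq_mk_of_weight_eq {s t : Multiset P} (h : weight lt s = weight lt t) : π s = π t := by
  have hst : s + t.filter (Absorbs lt s) = t + s.filter (Absorbs lt s) :=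
    calc s + t.filter (Absorbs lt s)
        = s.filter (Absorbs lt s) + s.filter (¬ Absorbs lt s ·) + t.filter (Absorbs lt s) := by
          rw [filter_add_not]
      _ = t.filter (Absorbs lt s) + t.filter (¬ Absorbs lt s ·) + s.filter (Absorbs lt s) := by
          rw [filter_not_absorbs_eq_of_weight_eq h]; abel
      _ = t + s.filter (Absorbs lt s) := by rw [filter_add_not]
  calc π s = π (s + t.filter (Absorbs lt s)) :=
        (mk_add_eq_of_forall_absorbs fun q hq => (mem_filter.1 hq).2).symm
    _ = π (t + s.filter (Absorbs lt s)) := by rw [hst]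
    _ = π t := mk_add_eq_of_forall_absorbs fun q hq =>
        (absorbs_iff_of_weight_eq h q).1 (mem_filter.1 hq).2

/-- The elements not absorbed by `a + b` (nor, equivalently, by `c + d`) are split by refinement in
the free monoid. An absorbed element of `a` or `b` goes to `x` or `z` if `c` absorbs it and to `y`
or `w` otherwise (then `d` absorbs it), and symmetrically for `c` and `d`; so each of the four sums
exceeds its target only by elements the target absorbs. -/
theorem exists_refinement_of_weight_eq {a b c d : Multiset P}
    (h : weight lt (a + b) = weight lt (c + d)) : ∃ x y z w : Multiset P,
      π a = π (x + y) ∧ π b = π (z + w) ∧ π c = π (x + z) ∧ π d = π (y + w) := by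
  set Aab := Absorbs lt (a + b)
  obtain ⟨xF, yF, zF, wF, ha, hb, hc, hd⟩ := Multiset.isRefinement
    (a.filter (¬ Aab ·)) (b.filter (¬ Aab ·)) (c.filter (¬ Aab ·)) (d.filter (¬ Aab ·))
    (by rw [← filter_add, ← filter_add]; exact filter_not_absorbs_eq_of_weight_eq h)
  have hcd : ∀ q, Aab q → ¬ Absorbs lt c q → Absorbs lt d q := fun q hq hqc =>
    (absorbs_add.1 ((absorbs_iff_of_weight_eq h q).1 hq)).resolve_left hqc
  have hab : ∀ q, Aab q → ¬ Absorbs lt a q → Absorbs lt b q := fun q hq hqa =>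
    (absorbs_add.1 hq).resolve_left hqa
  set Ac := Absorbs lt c
  set Aa := Absorbs lt a
  refine ⟨(a.filter Aab).filter Ac + xF + (c.filter Aab).filter Aa,
    (a.filter Aab).filter (¬ Ac ·) + yF + (d.filter Aab).filter Aa,
    (b.filter Aab).filter Ac + zF + (c.filter Aab).filter (¬ Aa ·),
    (b.filter Aab).filter (¬ Ac ·) + wF + (d.filter Aab).filter (¬ Aa ·), ?_, ?_, ?_, ?_⟩
  · calc π a = π (a + (c.filter Aab + d.filter Aab).filter Aa) :=
          (mk_add_eq_of_forall_absorbs fun q hq => (mem_filter.1 hq).2).symm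
      _ = π ((a.filter Aab).filter Ac + (a.filter Aab).filter (¬ Ac ·) + (xF + yF)
            + ((c.filter Aab).filter Aa + (d.filter Aab).filter Aa)) := by
          rw [filter_add_not, ← ha, filter_add_not, filter_add]
      _ = _ := by congr 1; abel
  · calc π b = π (b + (c.filter Aab + d.filter Aab).filter (¬ Aa ·)) :=
          (mk_add_eq_of_forall_absorbs fun q hq => by
            simp only [mem_filter, mem_add] at hq
            exact hab q (by tauto) hq.2).symm
      _ = π ((b.filter Aab).filter Ac + (b.filter Aab).filter (¬ Ac ·) + (zF + wF)
            + ((c.filter Aab).filter (¬ Aa ·) + (d.filter Aab).filter (¬ Aa ·))) := by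
          rw [filter_add_not, ← hb, filter_add_not, filter_add]
      _ = _ := by congr 1; abel
  · calc π c = π (c + (a.filter Aab + b.filter Aab).filter Ac) :=
          (mk_add_eq_of_forall_absorbs fun q hq => (mem_filter.1 hq).2).symm
      _ = π ((c.filter Aab).filter Aa + (c.filter Aab).filter (¬ Aa ·) + (xF + zF)
            + ((a.filter Aab).filter Ac + (b.filter Aab).filter Ac)) := by
          rw [filter_add_not, ← hc, filter_add_not, filter_add]
      _ = _ := by congr 1; abel
  · calc π d = π (d + (a.filter Aab + b.filter Aab).filter (¬ Ac ·)) :=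
          (mk_add_eq_of_forall_absorbs fun q hq => by
            simp only [mem_filter, mem_add] at hq
            exact hcd q (by tauto) hq.2).symm
      _ = π ((d.filter Aab).filter Aa + (d.filter Aab).filter (¬ Aa ·) + (yF + wF)
            + ((a.filter Aab).filter (¬ Ac ·) + (b.filter Aab).filter (¬ Ac ·))) := by
          rw [filter_add_not, ← hd, filter_add_not, filter_add]
      _ = _ := by congr 1; abel

theorem mk_eq_sum_map_mk_singleton (s : Multiset P) : π s = (s.map fun p => π {p}).sum := by
  conv_lhs => rw [← sum_map_singleton s]
  rw [map_multiset_sum, map_map]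
  rfl

variable [IsTrans P lt]

theorem weight_singleton_add_singleton {p q : P} (h : lt q p) :
    weight lt ({p} + {q}) = weight lt {p} := by
  funext r
  rw [weight_add, Pi.add_apply]
  by_cases hrq : lt r q
  · rw [weight_eq_top_iff.2 ⟨p, mem_singleton_self p, trans_of lt hrq h⟩, top_add]
  · by_cases hr : r = q
    · rw [hr, weight_eq_top_iff.2 ⟨p, mem_singleton_self p, h⟩, top_add]
    · simp [weight, Absorbs, hrq, hr]

theorem addConGen_le_ker_weightHom : addConGen (primRel P lt) ≤ AddCon.ker (weightHom lt) := by
  rw [AddCon.addConGen_le]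
  rintro _ _ ⟨p, q, h, rfl, rfl⟩
  exact ((AddCon.ker_rel _).2 (weight_singleton_add_singleton h)).symm

theorem mk_eq_mk_iff_weight_eq {s t : Multiset P} : π s = π t ↔ weight lt s = weight lt t :=
  ⟨fun h => (AddCon.ker_rel (weightHom lt)).1 (addConGen_le_ker_weightHom ((AddCon.eq _).1 h)),
    mk_eq_mk_of_weight_eq⟩

variable (lt) in
noncomputable def weightEmb : PrimMonoid P lt →+ (P → WithTop ℕ) :=
  (addConGen (primRel P lt)).lift (weightHom lt) addConGen_le_ker_weightHom

theorem weightEmb_mk (s : Multiset P) : weightEmb lt (π s) = weight lt s :=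
  AddCon.lift_mk' _ s

theorem weightEmb_injective : Function.Injective (weightEmb lt) := by
  intro x y h
  obtain ⟨s, rfl⟩ := AddCon.mk'_surjective x
  obtain ⟨t, rfl⟩ := AddCon.mk'_surjective y
  rw [weightEmb_mk, weightEmb_mk] at h
  exact mk_eq_mk_iff_weight_eq.2 h

theorem isConical : IsConical (PrimMonoid P lt) :=
  isConical_of_injective _ weightEmb_injective

theorem isAntisymmetric : IsAntisymmetric (PrimMonoid P lt) :=
  isAntisymmetric_of_injective _ weightEmb_injective

theorem mk_singleton_algLE_mk_iff {p : P} {s : Multiset P} :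
    AlgLE (π {p}) (π s) ↔ weight lt s p ≠ 0 := by
  constructor
  · rintro ⟨z, hz⟩
    obtain ⟨t, rfl⟩ := AddCon.mk'_surjective z
    rw [← map_add, mk_eq_mk_iff_weight_eq, weight_add] at hz
    rw [hz, Pi.add_apply, add_ne_zero]
    exact Or.inl (weight_ne_zero_iff.2 (Or.inl (mem_singleton_self p)))
  · rw [weight_ne_zero_iff]
    rintro (hp | ⟨q, hq, hpq⟩)
    · refine ⟨π (s.erase p), ?_⟩
      rw [← map_add, singleton_add, cons_erase hp]
    · refine ⟨π s, ?_⟩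
      rw [← map_add, add_comm, mk_add_eq_of_forall_absorbs]
      simpa using ⟨q, hq, hpq⟩

theorem isPrimeElem_mk_singleton (p : P) : IsPrimeElem (π {p}) := by
  refine ⟨fun h => ?_, fun x y hxy => ?_⟩
  · have hp := mk_singleton_algLE_mk_iff.1 (h ▸ AlgLE.refl _ : AlgLE (π {p}) (π 0))
    exact hp (congr_fun (map_zero (weightHom lt)) p)
  · obtain ⟨s, rfl⟩ := AddCon.mk'_surjective x
    obtain ⟨t, rfl⟩ := AddCon.mk'_surjective y
    rw [← map_add, mk_singleton_algLE_mk_iff, weight_add, Pi.add_apply, add_ne_zero] at hxy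
    simpa only [mk_singleton_algLE_mk_iff] using hxy

theorem primelyGenerated : PrimelyGenerated (PrimMonoid P lt) := by
  intro x
  obtain ⟨s, rfl⟩ := AddCon.mk'_surjective x
  refine ⟨s.map fun p => π {p}, ?_, mk_eq_sum_map_mk_singleton s⟩
  simp only [mem_map]
  rintro _ ⟨p, -, rfl⟩
  exact isPrimeElem_mk_singleton p

theorem isPrimeElem_iff {x : PrimMonoid P lt} : IsPrimeElem x ↔ ∃ p : P, x = π {p} := by
  refine ⟨fun hx => ?_, fun ⟨p, hp⟩ => hp ▸ isPrimeElem_mk_singleton p⟩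
  obtain ⟨s, rfl⟩ := AddCon.mk'_surjective x
  have hle : AlgLE (π s) (s.map fun p => π {p}).sum :=
    mk_eq_sum_map_mk_singleton s ▸ AlgLE.refl _
  obtain ⟨_, hq', hxq⟩ := hx.exists_algLE_of_algLE_sum isConical hle
  obtain ⟨q, hq, rfl⟩ := mem_map.1 hq'
  have hqx : AlgLE (π {q}) (π s) :=
    mk_singleton_algLE_mk_iff.2 (weight_ne_zero_iff.2 (Or.inl hq))
  exact ⟨q, isAntisymmetric _ _ hxq hqx⟩

theorem mk_singleton_add_mk_singleton_eq_iff {p q : P} :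
    π {p} + π {q} = π {p} ↔ lt q p := by
  refine ⟨fun h => ?_, fun h => ?_⟩
  · rw [← map_add, mk_eq_mk_iff_weight_eq, weight_add] at h
    by_contra hqp
    have hfin : weight lt {p} q ≠ ⊤ := by
      simpa [weight_eq_top_iff, Absorbs] using hqp
    exact weight_ne_zero_iff.2 (Or.inl (mem_singleton_self q))
      (WithTop.add_left_cancel hfin ((congr_fun h q).trans (add_zero _).symm))
  · rw [← map_add, mk_eq_mk_iff_weight_eq, weight_singleton_add_singleton h]

theorem eq_or_lt_of_mk_singleton_eq {p q : P} (h : π {p} = π {q}) : p = q ∨ lt p q := by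
  have hp := mk_singleton_algLE_mk_iff.1 (h ▸ AlgLE.refl _ : AlgLE (π {p}) (π {q}))
  simpa [Absorbs] using weight_ne_zero_iff.1 hp

theorem mk_singleton_injective [Std.Antisymm lt] : Function.Injective fun p : P => π {p} :=
  fun _ _ h => (eq_or_lt_of_mk_singleton_eq h).elim id fun hpq =>
    (eq_or_lt_of_mk_singleton_eq h.symm).elim Eq.symm (antisymm hpq)

theorem isRefinement : IsRefinement (PrimMonoid P lt) := by
  intro a b c d h
  obtain ⟨a, rfl⟩ := AddCon.mk'_surjective a
  obtain ⟨b, rfl⟩ := AddCon.mk'_surjective b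
  obtain ⟨c, rfl⟩ := AddCon.mk'_surjective c
  obtain ⟨d, rfl⟩ := AddCon.mk'_surjective d
  rw [← map_add, ← map_add, mk_eq_mk_iff_weight_eq] at h
  obtain ⟨x, y, z, w, hxy, hzw, hxz, hyw⟩ := exists_refinement_of_weight_eq h
  exact ⟨π x, π y, π z, π w, by rwa [← map_add], by rwa [← map_add],
    by rwa [← map_add], by rwa [← map_add]⟩

end PrimMonoid

/-- For a transitive antisymmetric relation `◁` on a set `P`, the monoid `M(P, ◁)`
is a primitive (conical, antisymmetric, primely generated refinement) monoid, the
canonical map `P → M(P, ◁)` is injective, the primes of `M(P, ◁)` are exactly the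
classes of elements of `P`, and `[p] + [q] = [p]` iff `q ◁ p`. -/
theorem statement7 (P : Type) (lt : P → P → Prop)
    (htrans : ∀ a b c : P, lt a b → lt b c → lt a c)
    (hanti : ∀ a b : P, lt a b → lt b a → a = b) :
    IsConical (PrimMonoid P lt) ∧
    IsAntisymmetric (PrimMonoid P lt) ∧
    PrimelyGenerated (PrimMonoid P lt) ∧
    IsRefinement (PrimMonoid P lt) ∧
    Function.Injective (fun p : P => (addConGen (primRel P lt)).mk' ({p} : Multiset P)) ∧
    (∀ x : PrimMonoid P lt, IsPrimeElem x ↔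
      ∃ p : P, x = (addConGen (primRel P lt)).mk' ({p} : Multiset P)) ∧
    (∀ p q : P,
      (addConGen (primRel P lt)).mk' ({p} : Multiset P) +
        (addConGen (primRel P lt)).mk' ({q} : Multiset P) =
        (addConGen (primRel P lt)).mk' ({p} : Multiset P) ↔ lt q p) := by
  have : IsTrans P lt := ⟨htrans⟩
  have : Std.Antisymm lt := ⟨hanti⟩
  exact ⟨PrimMonoid.isConical, PrimMonoid.isAntisymmetric, PrimMonoid.primelyGenerated,
    PrimMonoid.isRefinement, PrimMonoid.mk_singleton_injective,
    fun _ => PrimMonoid.isPrimeElem_iff, fun _ _ => PrimMonoid.mk_singleton_add_mk_singleton_eq_iff⟩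
end

section
/- Let M be a primitive monoid, let P be its set of prime elements, and define q ◁ p for p, q ∈ P by p + q = p. Then ◁ is a transitive antisymmetric relation on P, and M is isomorphic to M(P,◁), the quotient of the free commutative monoid on P by the smallest monoid congruence identifying p with p + q whenever q ◁ p. -/
/-!
Summing multisets of primes maps the free commutative monoid on `P` onto `M`, and the relations
`p = p + q` for `q ◁ p` lie in its kernel; the point is that they generate the whole kernel.
Deleting absorbed primes rewrites every multiset into one in which no prime absorbs another, and
such absorption-free multisets are determined by their sum. Indeed, in an antisymmetric monoid
everything below a prime `p` is either `p` or absorbed by `p`, so the primes occurring are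
exactly the maximal primes below the sum. An idempotent prime then occurs once, and a prime with
`p + p ≠ p` can be cancelled from `a + p = b + p` by refinement up to summands absorbed by `p`,
which recovers its multiplicity.
-/

section AlgebraicPreorder

variable {M : Type*} [AddCommMonoid M]

lemma algLE_add_right (x z : M) : AlgLE x (x + z) := ⟨z, rfl⟩

lemma AlgLE.trans {x y z : M} (hxy : AlgLE x y) (hyz : AlgLE y z) : AlgLE x z := by
  obtain ⟨a, rfl⟩ := hxy
  obtain ⟨b, rfl⟩ := hyz
  exact ⟨a + b, add_assoc _ _ _⟩

lemma IsAntisymmetric.isConical (hA : IsAntisymmetric M) : IsConical M := fun x y h =>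
  ⟨(hA 0 x ⟨x, (zero_add x).symm⟩ ⟨y, h.symm⟩).symm,
    (hA 0 y ⟨y, (zero_add y).symm⟩ ⟨x, (add_comm y x ▸ h).symm⟩).symm⟩

end AlgebraicPreorder

namespace IsPrimeElem

variable {M : Type*} [AddCommMonoid M] {p : M}

lemma exists_mem_algLE_of_algLE_sum (hC : IsConical M) (hp : IsPrimeElem p) {l : Multiset M}
    (h : AlgLE p l.sum) : ∃ q ∈ l, AlgLE p q := by
  induction l using Multiset.induction_on with
  | empty =>
    obtain ⟨z, hz⟩ := h
    exact absurd (hC p z (by simpa using hz.symm)).1 hp.1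
  | cons a l ih =>
    rw [Multiset.sum_cons] at h
    rcases hp.2 a l.sum h with ha | hl
    · exact ⟨a, Multiset.mem_cons_self a l, ha⟩
    · obtain ⟨q, hq, hpq⟩ := ih hl
      exact ⟨q, Multiset.mem_cons_of_mem hq, hpq⟩

lemma eq_or_add_eq_self_of_algLE (hA : IsAntisymmetric M) (hp : IsPrimeElem p) {q : M}
    (hqp : AlgLE q p) : q = p ∨ p + q = p := by
  obtain ⟨z, hz⟩ := hqp
  rcases hp.2 q z ⟨0, by rw [add_zero, hz]⟩ with hpq | hpz
  · exact Or.inl (hA q p ⟨z, hz⟩ hpq)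
  · obtain ⟨w, rfl⟩ := hpz
    refine Or.inr (hA (p + q) p ⟨w, ?_⟩ (algLE_add_right p q))
    calc p = q + (p + w) := hz
      _ = p + q + w := by abel

lemma not_algLE_add (hA : IsAntisymmetric M) (hp : IsPrimeElem p) (hfree : p + p ≠ p)
    {s z : M} (hs : ¬ AlgLE p s) (hz : p + z = p) : ¬ AlgLE p (s + z) := by
  intro h
  rcases hp.2 s z h with hps | hpz
  · exact hs hps
  · have hzp : z = p := hA z p ⟨p, by rw [add_comm, hz]⟩ hpz
    exact hfree (hzp ▸ hz)

lemma exists_eq_add_of_add_eq_add (hA : IsAntisymmetric M) (hR : IsRefinement M)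
    (hp : IsPrimeElem p) {a b : M} (h : a + p = b + p) :
    ∃ u y z, a = u + y ∧ b = u + z ∧ p + y = p ∧ p + z = p := by
  obtain ⟨x, y, z, w, ha, hzw, hb, hyw⟩ := hR a p b p h
  rcases hp.eq_or_add_eq_self_of_algLE hA ⟨w, hyw⟩ with rfl | hy
  · refine ⟨b, w, 0, ?_, (add_zero b).symm, hyw.symm, add_zero y⟩
    rw [ha, hb, hzw]
    abel
  rcases hp.eq_or_add_eq_self_of_algLE hA ⟨w, hzw⟩ with rfl | hz
  · refine ⟨a, 0, w, (add_zero a).symm, ?_, add_zero z, hzw.symm⟩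
    rw [ha, hb, hyw]
    abel
  exact ⟨x, y, z, ha, hb, hy, hz⟩

lemma nsmul_add_injective (hA : IsAntisymmetric M) (hR : IsRefinement M) (hp : IsPrimeElem p)
    (hfree : p + p ≠ p) :
    ∀ (m n : ℕ) {s t : M}, ¬ AlgLE p s → ¬ AlgLE p t → m • p + s = n • p + t → m = n
  | 0, 0, _, _, _, _, _ => rfl
  | 0, n + 1, s, t, hs, _, h => by
    refine absurd ⟨n • p + t, ?_⟩ hs
    rw [zero_nsmul, zero_add] at h
    rw [h, succ_nsmul]
    abel
  | m + 1, 0, s, t, _, ht, h => by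
    refine absurd ⟨m • p + s, ?_⟩ ht
    rw [zero_nsmul, zero_add] at h
    rw [← h, succ_nsmul]
    abel
  | m + 1, n + 1, s, t, hs, ht, h => by
    have h' : (m • p + s) + p = (n • p + t) + p := by
      rw [succ_nsmul, succ_nsmul] at h
      calc (m • p + s) + p = m • p + p + s := by abel
        _ = n • p + p + t := h
        _ = (n • p + t) + p := by abel
    obtain ⟨u, y, z, hs', ht', hy, hz⟩ := hp.exists_eq_add_of_add_eq_add hA hR h'
    refine congrArg (· + 1) (nsmul_add_injective hA hR hp hfree m n
      (hp.not_algLE_add hA hfree hs hz) (hp.not_algLE_add hA hfree ht hy) ?_)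
    calc m • p + (s + z) = (m • p + s) + z := (add_assoc _ _ _).symm
      _ = (u + z) + y := by rw [hs']; abel
      _ = n • p + (t + y) := by rw [← ht']; abel

end IsPrimeElem

section PrimeMultisets

variable {M : Type} [AddCommMonoid M]

/-- The relation `q ◁ p` on primes. -/
def AbsorbedBy (q p : {x : M // IsPrimeElem x}) : Prop := (p : M) + q = p

def primeSum : Multiset {x : M // IsPrimeElem x} →+ M :=
  Multiset.sumAddMonoidHom.comp (Multiset.mapAddMonoidHom Subtype.val)

lemma primeSum_apply (σ : Multiset {x : M // IsPrimeElem x}) :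
    primeSum σ = (σ.map Subtype.val).sum := rfl

lemma primeSum_cons (q : {x : M // IsPrimeElem x}) (σ : Multiset {x : M // IsPrimeElem x}) :
    primeSum (q ::ₘ σ) = q + primeSum σ := by
  simp [primeSum_apply]

lemma primeSum_surjective (hG : PrimelyGenerated M) :
    Function.Surjective (primeSum : Multiset {x : M // IsPrimeElem x} → M) := by
  intro m
  obtain ⟨l, hl, rfl⟩ := hG m
  refine ⟨l.attach.map fun z => ⟨z.1, hl z.1 z.2⟩, ?_⟩
  rw [primeSum_apply, Multiset.map_map]
  exact congrArg Multiset.sum ((Multiset.attach_map_val' l id).trans (Multiset.map_id l))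

lemma algLE_primeSum_of_mem {σ : Multiset {x : M // IsPrimeElem x}}
    {q : {x : M // IsPrimeElem x}} (hq : q ∈ σ) : AlgLE (q : M) (primeSum σ) := by
  classical
  exact ⟨primeSum (σ.erase q), by rw [← primeSum_cons, Multiset.cons_erase hq]⟩

lemma exists_mem_algLE_of_algLE_primeSum (hC : IsConical M) {p : M} (hp : IsPrimeElem p)
    {σ : Multiset {x : M // IsPrimeElem x}} (h : AlgLE p (primeSum σ)) :
    ∃ q ∈ σ, AlgLE p (q : M) := by
  obtain ⟨_, hq, hpq⟩ := hp.exists_mem_algLE_of_algLE_sum hC h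
  obtain ⟨q, hqσ, rfl⟩ := Multiset.mem_map.mp hq
  exact ⟨q, hqσ, hpq⟩

lemma primeSum_eq_count_nsmul_add [DecidableEq {x : M // IsPrimeElem x}]
    (σ : Multiset {x : M // IsPrimeElem x}) (x : {x : M // IsPrimeElem x}) :
    primeSum σ = σ.count x • (x : M) + primeSum (σ.filter (· ≠ x)) := by
  conv_lhs => rw [← Multiset.filter_add_not (· = x) σ]
  rw [map_add, Multiset.filter_eq']
  simp [primeSum_apply, Multiset.map_replicate]

def IsAbsorptionFree (σ : Multiset {x : M // IsPrimeElem x}) : Prop :=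
  ∀ q p ρ, σ = q ::ₘ p ::ₘ ρ → ¬ AbsorbedBy q p

namespace IsAbsorptionFree

variable {σ : Multiset {x : M // IsPrimeElem x}}

lemma eq_of_algLE (hA : IsAntisymmetric M) (hσ : IsAbsorptionFree σ)
    {x p : {x : M // IsPrimeElem x}} (hx : x ∈ σ) (hp : p ∈ σ) (hxp : AlgLE (x : M) p) :
    x = p := by
  classical
  by_contra hne
  rcases p.2.eq_or_add_eq_self_of_algLE hA hxp with heq | habs
  · exact hne (Subtype.ext heq)
  · have hp' : p ∈ σ.erase x := (Multiset.mem_erase_of_ne (Ne.symm hne)).mpr hp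
    exact hσ x p ((σ.erase x).erase p)
      (by rw [Multiset.cons_erase hp', Multiset.cons_erase hx]) habs

lemma count_eq_one (hσ : IsAbsorptionFree σ) [DecidableEq {x : M // IsPrimeElem x}]
    {x : {x : M // IsPrimeElem x}} (hx : x ∈ σ) (hidem : (x : M) + x = x) : σ.count x = 1 := by
  refine le_antisymm (not_lt.mp fun htwo => ?_) (Multiset.count_pos.mpr hx)
  obtain ⟨ρ, hρ⟩ := Multiset.le_iff_exists_add.mp (Multiset.le_count_iff_replicate_le.mp htwo)
  exact hσ x x ρ (by rw [hρ]; simp [Multiset.replicate_succ]) hidem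

lemma not_algLE_primeSum_filter_ne (hA : IsAntisymmetric M) (hσ : IsAbsorptionFree σ)
    [DecidableEq {x : M // IsPrimeElem x}] {x : {x : M // IsPrimeElem x}} (hx : x ∈ σ) :
    ¬ AlgLE (x : M) (primeSum (σ.filter (· ≠ x))) := fun h => by
  obtain ⟨q, hq, hxq⟩ := exists_mem_algLE_of_algLE_primeSum hA.isConical x.2 h
  obtain ⟨hqσ, hqx⟩ := Multiset.mem_filter.mp hq
  exact hqx (hσ.eq_of_algLE hA hx hqσ hxq).symm

lemma mem_of_primeSum_eq (hA : IsAntisymmetric M) (hσ : IsAbsorptionFree σ)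
    {τ : Multiset {x : M // IsPrimeElem x}} (h : primeSum σ = primeSum τ)
    {x : {x : M // IsPrimeElem x}} (hx : x ∈ σ) : x ∈ τ := by
  obtain ⟨q, hqτ, hxq⟩ :=
    exists_mem_algLE_of_algLE_primeSum hA.isConical x.2 (h ▸ algLE_primeSum_of_mem hx)
  obtain ⟨p, hpσ, hqp⟩ :=
    exists_mem_algLE_of_algLE_primeSum hA.isConical q.2 (h.symm ▸ algLE_primeSum_of_mem hqτ)
  obtain rfl := hσ.eq_of_algLE hA hx hpσ (hxq.trans hqp)
  obtain rfl : q = x := Subtype.ext (hA _ _ hqp hxq)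
  exact hqτ

lemma eq_of_primeSum_eq (hA : IsAntisymmetric M) (hR : IsRefinement M)
    (hσ : IsAbsorptionFree σ) {τ : Multiset {x : M // IsPrimeElem x}} (hτ : IsAbsorptionFree τ)
    (h : primeSum σ = primeSum τ) : σ = τ := by
  classical
  ext x
  by_cases hxσ : x ∈ σ
  · have hxτ := hσ.mem_of_primeSum_eq hA h hxσ
    by_cases hidem : (x : M) + x = x
    · rw [hσ.count_eq_one hxσ hidem, hτ.count_eq_one hxτ hidem]
    · refine x.2.nsmul_add_injective hA hR hidem _ _ (hσ.not_algLE_primeSum_filter_ne hA hxσ)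
        (hτ.not_algLE_primeSum_filter_ne hA hxτ) ?_
      rw [← primeSum_eq_count_nsmul_add, ← primeSum_eq_count_nsmul_add, h]
  · have hxτ : x ∉ τ := fun hxτ => hxσ (hτ.mem_of_primeSum_eq hA h.symm hxτ)
    rw [Multiset.count_eq_zero.mpr hxσ, Multiset.count_eq_zero.mpr hxτ]

end IsAbsorptionFree

lemma exists_isAbsorptionFree_addConGen_rel (σ : Multiset {x : M // IsPrimeElem x}) :
    ∃ σ', addConGen (primRel _ AbsorbedBy) σ σ' ∧ IsAbsorptionFree σ' ∧
      primeSum σ' = primeSum σ := by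
  set c := addConGen (primRel {x : M // IsPrimeElem x} AbsorbedBy)
  induction σ using Multiset.strongInductionOn with
  | ih σ ih =>
    by_cases hσ : IsAbsorptionFree σ
    · exact ⟨σ, c.refl σ, hσ, rfl⟩
    simp only [IsAbsorptionFree, not_forall, not_not] at hσ
    obtain ⟨q, p, ρ, rfl, hqp⟩ := hσ
    have hrel : c (q ::ₘ p ::ₘ ρ) (p ::ₘ ρ) := by
      have := c.add (AddConGen.Rel.of _ _ ⟨p, q, hqp, rfl, rfl⟩) (c.refl ρ)
      simpa [Multiset.singleton_add, Multiset.cons_swap p q] using c.symm this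
    obtain ⟨σ', hσ'rel, hσ', hsum⟩ := ih (p ::ₘ ρ) (Multiset.lt_cons_self _ q)
    refine ⟨σ', c.trans hrel hσ'rel, hσ', ?_⟩
    rw [hsum, primeSum_cons, primeSum_cons, primeSum_cons, ← add_assoc, add_comm (q : M), hqp]

lemma addConGen_primRel_eq_ker (hA : IsAntisymmetric M) (hR : IsRefinement M) :
    addConGen (primRel _ AbsorbedBy) = AddCon.ker (primeSum (M := M)) := by
  refine le_antisymm (AddCon.addConGen_le.mpr ?_) fun σ τ h => ?_
  · rintro _ _ ⟨p, q, hqp, rfl, rfl⟩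
    simpa [AddCon.ker_rel, primeSum_apply] using hqp.symm
  · obtain ⟨σ', hσσ', hσ', hσsum⟩ := exists_isAbsorptionFree_addConGen_rel σ
    obtain ⟨τ', hττ', hτ', hτsum⟩ := exists_isAbsorptionFree_addConGen_rel τ
    obtain rfl : σ' = τ' := hσ'.eq_of_primeSum_eq hA hR hτ' <| by
      rw [hσsum, hτsum]
      exact (AddCon.ker_rel _).mp h
    exact hσσ'.trans hττ'.symm

end PrimeMultisets

/-- Every primitive monoid `M` is determined by its set `P` of primes together with
the transitive antisymmetric relation `q ◁ p ↔ p + q = p`: the relation is indeed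
transitive and antisymmetric, and `M ≅ M(P, ◁)`. -/
theorem statement8 (M : Type) [AddCommMonoid M] (hM : IsPrimitive M) :
    let P := {x : M // IsPrimeElem x}
    let lt : P → P → Prop := fun q p => (p : M) + (q : M) = (p : M)
    (∀ a b c : P, lt a b → lt b c → lt a c) ∧
    (∀ a b : P, lt a b → lt b a → a = b) ∧
    Nonempty (M ≃+ PrimMonoid P lt) := by
  intro P lt
  obtain ⟨hA, hG, hR⟩ := hM
  refine ⟨fun a b c hab hbc => ?_, fun a b hab hba => ?_, ?_⟩
  · calc (c : M) + a = c + b + a := by rw [hbc]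
      _ = c := by rw [add_assoc, hab, hbc]
  · exact Subtype.ext (hba.symm.trans ((add_comm _ _).trans hab))
  · have hker : addConGen (primRel P lt) =
        (AddCon.ker primeSum).comap _ (map_add (AddEquiv.refl _)) :=
      addConGen_primRel_eq_ker hA hR
    exact ⟨((AddCon.congr (AddEquiv.refl _) hker).trans
      (AddCon.quotientKerEquivOfSurjective _ (primeSum_surjective hG))).symm⟩
end
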